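/- arXiv:2412.09005 — 2 statements merged into one kernel-verified Lean document; each statement's English description precedes it below -/
import Mathlib

section
/- Let G = (V, E) be an undirected graph whose vertices are partitioned into k color classes V_1, …, V_k, each of size c. Construct a CMS instance with a special binary issue I_s with alternatives {P, N}, one issue I_j with domain V_j for each color j, a special voter approving P unconditionally and all alternatives of every other issue, and for each pair of colors {x, y} a voter who approves all alternatives of all issues other than I_s unconditionally, and whose conditional ballot on I_s contains the statement {uv : P} for every edge (u, v) ∈ E with u ∈ V_x and v ∈ V_y. Then there exists an outcome with total dissatisfaction 0 if and only if G contains a multicolored clique, i.e., a set of k pairwise-adjacent vertices, one from each color class. -/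
/-- Total dissatisfaction in the CMS instance built from a `k`-colored graph `G` on
vertex set `Fin k × Fin c` (vertex `(j, u)` has color `j`): the outcome chooses a
vertex `assn j` of each color `j` and an alternative `sp` (`true` = P, `false` = N)
for the special issue. The special voter is dissatisfied (on the special issue) iff
`N` is chosen, and the voter for a pair of colors `x < y` is dissatisfied (on the
special issue) unless `P` is chosen and the selected vertices of colors `x` and `y`
are adjacent; all voters are satisfied with every other issue. -/
def cmsDissat {k c : ℕ} (G : SimpleGraph (Fin k × Fin c)) [DecidableRel G.Adj]
    (assn : Fin k → Fin c) (sp : Bool) : ℕ :=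
  (if sp then 0 else 1) +
    ∑ x : Fin k, ∑ y : Fin k,
      if x < y ∧ ¬(sp = true ∧ G.Adj (x, assn x) (y, assn y)) then 1 else 0

/-- The constructed CMS instance has an outcome with total dissatisfaction `0` iff the
graph contains a multicolored clique: `k` pairwise-adjacent vertices, one of each color. -/
theorem cms_zero_iff_multicoloredClique {k c : ℕ}
    (G : SimpleGraph (Fin k × Fin c)) [DecidableRel G.Adj] :
    (∃ (assn : Fin k → Fin c) (sp : Bool), cmsDissat G assn sp = 0) ↔
    (∃ f : Fin k → Fin c, ∀ x y : Fin k, x ≠ y → G.Adj (x, f x) (y, f y)) := by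
  constructor
  · rintro ⟨assn, sp, h⟩
    unfold cmsDissat at h
    rw [Nat.add_eq_zero] at h
    obtain ⟨h1, h2⟩ := h
    have hsp : sp = true := by
      cases sp with
      | false => simp at h1
      | true => rfl
    subst hsp
    refine ⟨assn, fun x y hxy => ?_⟩
    have key : ∀ x y : Fin k, x < y → G.Adj (x, assn x) (y, assn y) := by
      intro x y hlt
      by_contra hadj
      have := Finset.sum_eq_zero_iff.mp h2 x (Finset.mem_univ x)
      have := Finset.sum_eq_zero_iff.mp this y (Finset.mem_univ y)
      simp [hlt, hadj] at this
    rcases lt_or_gt_of_ne hxy with h | h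
    · exact key x y h
    · exact (key y x h).symm
  · rintro ⟨f, hf⟩
    refine ⟨f, true, ?_⟩
    unfold cmsDissat
    simp only [if_pos]
    rw [Nat.add_eq_zero]
    refine ⟨rfl, Finset.sum_eq_zero fun x _ => Finset.sum_eq_zero fun y _ => ?_⟩
    by_cases hxy : x < y
    · simp [hxy, hf x y hxy.ne]
    · simp [hxy]
end

section
/- Let Π be a binary constraint satisfaction instance with variable set X, domain Σ, and constraint set of size k, where each constraint involves two variables and is given by a set of satisfying pairs. Construct a CMS instance with one issue I_v with domain Σ for each variable v, one issue I_{uv} with domain Σ × Σ for each constraint on variables (u, v), and for each constraint on (u, v) and each pair (a, b) satisfying that constraint, a voter who accepts any outcome for all issues other than I_u and I_v, accepts any outcome for I_u and I_v whenever the outcome of I_{uv} is not (a, b), and when the outcome of I_{uv} is (a, b) accepts only a for I_u and only b for I_v. Then the CSP instance Π has a satisfying assignment for all k constraints if and only if the CMS instance has an outcome with total dissatisfaction 0. -/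
/-- Total dissatisfaction in the CMS instance built from a binary CSP with variables `X`,
domain `Sig`, and `k` constraints, where constraint `t` involves the pair of variables
`cons t` and has satisfying pairs `R t`. The outcome assigns a value `x v ∈ Sig` to each
variable-issue `I_v` and a satisfying pair `consAssn t ∈ R t` to each constraint-issue
`I_{uv}`. For each constraint `t` and each satisfying pair `(a, b) ∈ R t` there is a
voter who is dissatisfied with `I_u` (resp. `I_v`) iff the outcome of `I_{uv}` equals
`(a, b)` but the outcome of `I_u` is not `a` (resp. of `I_v` is not `b`), and is
satisfied with every other issue. -/
def cspCmsDissat {X Sig : Type*} [DecidableEq Sig] {k : ℕ}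
    (cons : Fin k → X × X) (R : Fin k → Finset (Sig × Sig))
    (x : X → Sig) (consAssn : ∀ t, {p : Sig × Sig // p ∈ R t}) : ℕ :=
  ∑ t : Fin k, ∑ p ∈ R t,
    ((if (consAssn t : Sig × Sig) = p ∧ x (cons t).1 ≠ p.1 then 1 else 0) +
     (if (consAssn t : Sig × Sig) = p ∧ x (cons t).2 ≠ p.2 then 1 else 0))

/-- The binary CSP has an assignment satisfying all `k` constraints iff the constructed
CMS instance has an outcome with total dissatisfaction `0`. -/
theorem csp_iff_cms_zero {X Sig : Type*} [DecidableEq Sig] {k : ℕ}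
    (cons : Fin k → X × X) (R : Fin k → Finset (Sig × Sig)) :
    (∃ x : X → Sig, ∀ t, (x (cons t).1, x (cons t).2) ∈ R t) ↔
    (∃ (x : X → Sig) (consAssn : ∀ t, {p : Sig × Sig // p ∈ R t}),
      cspCmsDissat cons R x consAssn = 0) := by
  constructor
  · rintro ⟨x, hx⟩
    refine ⟨x, fun t => ⟨(x (cons t).1, x (cons t).2), hx t⟩, ?_⟩
    unfold cspCmsDissat
    refine Finset.sum_eq_zero fun t _ => Finset.sum_eq_zero fun p hp => ?_
    have h1 : ¬(((x (cons t).1, x (cons t).2) : Sig × Sig) = p ∧ x (cons t).1 ≠ p.1) := by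
      rintro ⟨he, hne⟩; exact hne (by rw [← he])
    have h2 : ¬(((x (cons t).1, x (cons t).2) : Sig × Sig) = p ∧ x (cons t).2 ≠ p.2) := by
      rintro ⟨he, hne⟩; exact hne (by rw [← he])
    simp [h1, h2]
  · rintro ⟨x, consAssn, h⟩
    refine ⟨x, fun t => ?_⟩
    unfold cspCmsDissat at h
    rw [Finset.sum_eq_zero_iff] at h
    have ht := h t (Finset.mem_univ t)
    rw [Finset.sum_eq_zero_iff] at ht
    have hp := ht (consAssn t : Sig × Sig) (consAssn t).2
    have h1 : x (cons t).1 = (consAssn t : Sig × Sig).1 := by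
      by_contra hne; simp [hne] at hp
    have h2 : x (cons t).2 = (consAssn t : Sig × Sig).2 := by
      by_contra hne; simp [hne] at hp
    rw [h1, h2]
    exact (consAssn t).2
end
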